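/- arXiv:1605.05458 — 4 statements merged into one kernel-verified Lean document; each statement's English description precedes it below -/
import Mathlib

section
/- Let R be a semisimple ring and C = ⊕_{n∈ℕ} C_n a connected R-coring. Then C is strongly graded (i.e. all the components Δ_{p,q} : C_{p+q} → C_p ⊗_R C_q of the comultiplication are injective) if and only if the set P(C) of primitive elements of C equals the homogeneous component C_1. -/
noncomputable section
open MulOpposite
open scoped DirectSum

namespace P1605

--CHUNK_T_BEGIN

section TensorR

variable (R : Type) [Ring R]
variable (M N : Type) [AddCommGroup M] [AddCommGroup N] [Module Rᵐᵒᵖ M] [Module R N]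

/-- The subgroup of the `ℤ`-tensor product by which one quotients to obtain the
balanced tensor product `M ⊗_R N` of a right `R`-module and a left `R`-module. -/
def trel : Submodule ℤ (TensorProduct ℤ M N) :=
  Submodule.span ℤ {x | ∃ (r : R) (m : M) (n : N),
    x = (op r • m) ⊗ₜ[ℤ] n - m ⊗ₜ[ℤ] (r • n)}

/-- The tensor product `M ⊗_R N` over a (possibly noncommutative) ring `R`,
of a right `R`-module `M` and a left `R`-module `N`. -/
def TensorR : Type := TensorProduct ℤ M N ⧸ trel R M N

instance : AddCommGroup (TensorR R M N) :=
  inferInstanceAs (AddCommGroup (TensorProduct ℤ M N ⧸ trel R M N))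

variable {R M N}

/-- The canonical balanced biadditive map `M × N → M ⊗_R N`, `(m, n) ↦ m ⊗ n`. -/
def tp (m : M) (n : N) : TensorR R M N := Submodule.Quotient.mk (m ⊗ₜ[ℤ] n)

theorem tp_add_left (m m' : M) (n : N) :
    tp (R := R) (m + m') n = tp m n + tp m' n := by
  show Submodule.Quotient.mk _ = _
  rw [TensorProduct.add_tmul]; exact Submodule.Quotient.mk_add ..

theorem tp_add_right (m : M) (n n' : N) :
    tp (R := R) m (n + n') = tp m n + tp m n' := by
  show Submodule.Quotient.mk _ = _
  rw [TensorProduct.tmul_add]; exact Submodule.Quotient.mk_add ..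

@[simp] theorem tp_zero_left (n : N) : tp (R := R) (0 : M) n = 0 := by
  show Submodule.Quotient.mk _ = _
  rw [TensorProduct.zero_tmul]; exact Submodule.Quotient.mk_eq_zero _ |>.2 (zero_mem _)

@[simp] theorem tp_zero_right (m : M) : tp (R := R) m (0 : N) = 0 := by
  show Submodule.Quotient.mk _ = _
  rw [TensorProduct.tmul_zero]; exact Submodule.Quotient.mk_eq_zero _ |>.2 (zero_mem _)

/-- The balance relation `(m · r) ⊗ n = m ⊗ (r · n)`. -/
theorem tp_balance (r : R) (m : M) (n : N) :
    tp (R := R) (op r • m) n = tp m (r • n) :=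
  (Submodule.Quotient.eq _).2 (Submodule.subset_span ⟨r, m, n, rfl⟩)

theorem tp_neg_left (m : M) (n : N) : tp (R := R) (-m) n = - tp m n := by
  have := tp_add_left (R := R) m (-m) n
  rw [add_neg_cancel, tp_zero_left] at this
  exact eq_neg_of_add_eq_zero_right this.symm

end TensorR

section TensorR

variable {R : Type} [Ring R]
variable {M N : Type} [AddCommGroup M] [AddCommGroup N] [Module Rᵐᵒᵖ M] [Module R N]
variable {P : Type} [AddCommGroup P]

/-- Universal property: a balanced biadditive map lifts to the tensor product. -/
def liftT (f : M →+ N →+ P)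
    (hf : ∀ (r : R) (m : M) (n : N), f (op r • m) n = f m (r • n)) :
    TensorR R M N →+ P :=
  ((trel R M N).liftQ
    (TensorProduct.lift (LinearMap.mk₂ ℤ (fun m n => f m n)
      (fun m m' n => by simp)
      (fun z m n => by simp)
      (fun m n n' => by simp)
      (fun z m n => by simp)))
    (by
      rw [trel, Submodule.span_le]
      rintro x ⟨r, m, n, rfl⟩
      erw [LinearMap.mem_ker, map_sub, TensorProduct.lift.tmul, TensorProduct.lift.tmul]
      simp [hf r m n])).toAddMonoidHom

@[simp] theorem liftT_tp (f : M →+ N →+ P)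
    (hf : ∀ (r : R) (m : M) (n : N), f (op r • m) n = f m (r • n)) (m : M) (n : N) :
    liftT f hf (tp m n) = f m n := rfl

theorem TensorR.ind {motive : TensorR R M N → Prop} (z : TensorR R M N)
    (h0 : motive 0) (htp : ∀ m n, motive (tp m n))
    (hadd : ∀ x y, motive x → motive y → motive (x + y)) : motive z := by
  obtain ⟨w, rfl⟩ := Submodule.Quotient.mk_surjective _ z
  induction w using TensorProduct.induction_on with
  | zero =>
      have : (Submodule.Quotient.mk (0 : TensorProduct ℤ M N) : TensorR R M N) = 0 :=
        (Submodule.Quotient.mk_eq_zero _).2 (zero_mem _)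
      rw [this]; exact h0
  | tmul m n => exact htp m n
  | add x y hx hy =>
      rw [Submodule.Quotient.mk_add]
      exact hadd _ _ hx hy

theorem TensorR.addHom_ext {f g : TensorR R M N →+ P}
    (h : ∀ m n, f (tp m n) = g (tp m n)) : f = g := by
  ext z
  induction z using TensorR.ind with
  | h0 => simp
  | htp m n => exact h m n
  | hadd x y hx hy => simp [hx, hy]

variable {M' N' : Type} [AddCommGroup M'] [AddCommGroup N'] [Module Rᵐᵒᵖ M'] [Module R N']

/-- Functoriality of the tensor product in both arguments, for equivariant additive maps. -/
def mapT (f : M →+ M') (g : N →+ N')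
    (hf : ∀ (r : R) (m : M), f (op r • m) = op r • f m)
    (hg : ∀ (r : R) (n : N), g (r • n) = r • g n) :
    TensorR R M N →+ TensorR R M' N' :=
  liftT (P := TensorR R M' N')
    (AddMonoidHom.mk' (fun m => AddMonoidHom.mk' (fun n => tp (R := R) (f m) (g n))
        (fun n n' => by (try dsimp only); rw [map_add, tp_add_right]))
      (fun m m' => by
        ext n
        show tp (R := R) (f (m + m')) (g n) = tp (f m) (g n) + tp (f m') (g n)
        rw [map_add, tp_add_left]))
    (fun r m n => by
      show tp (f (op r • m)) (g n) = tp (f m) (g (r • n))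
      rw [hf, hg]; exact tp_balance r (f m) (g n))

@[simp] theorem mapT_tp (f : M →+ M') (g : N →+ N')
    (hf : ∀ (r : R) (m : M), f (op r • m) = op r • f m)
    (hg : ∀ (r : R) (n : N), g (r • n) = r • g n) (m : M) (n : N) :
    mapT f g hf hg (tp m n) = tp (f m) (g n) := rfl

/-- A convenient unbundled version of the universal property. -/
def liftT₂ (f : M → N → P)
    (h1 : ∀ m m' n, f (m + m') n = f m n + f m' n)
    (h2 : ∀ m n n', f m (n + n') = f m n + f m n')
    (hb : ∀ (r : R) m n, f (op r • m) n = f m (r • n)) : TensorR R M N →+ P :=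
  liftT (AddMonoidHom.mk' (fun m => AddMonoidHom.mk' (f m) (h2 m))
    (fun m m' => AddMonoidHom.ext fun n => h1 m m' n)) hb

@[simp] theorem liftT₂_tp (f : M → N → P) (h1 : ∀ m m' n, f (m + m') n = f m n + f m' n)
    (h2 : ∀ m n n', f m (n + n') = f m n + f m n')
    (hb : ∀ (r : R) m n, f (op r • m) n = f m (r • n)) (m : M) (n : N) :
    liftT₂ f h1 h2 hb (tp m n) = f m n := rfl

end TensorR

section Modules

variable {R : Type} [Ring R]
variable {M N : Type} [AddCommGroup M] [AddCommGroup N] [Module Rᵐᵒᵖ M] [Module R N]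

section Left
variable [Module R M] [SMulCommClass R Rᵐᵒᵖ M]

/-- Left `R`-action on the tensor product, through the left factor. -/
def lsmT (r : R) : TensorR R M N →+ TensorR R M N :=
  mapT (DistribMulAction.toAddMonoidHom M r) (AddMonoidHom.id N)
    (fun s m => smul_comm r (op s) m) (fun _ _ => rfl)

instance instModLeftTensorR : Module R (TensorR R M N) where
  smul r z := lsmT r z
  one_smul z := by
    show lsmT 1 z = z
    induction z using TensorR.ind with
    | h0 => simp
    | htp m n => show tp ((1:R) • m) n = tp m n; rw [one_smul]
    | hadd x y hx hy => rw [map_add, hx, hy]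
  mul_smul r s z := by
    show lsmT (r * s) z = lsmT r (lsmT s z)
    induction z using TensorR.ind with
    | h0 => simp
    | htp m n => show tp ((r * s) • m) n = tp (r • s • m) n; rw [mul_smul]
    | hadd x y hx hy => simp only [map_add, hx, hy]
  smul_zero r := by show lsmT r 0 = 0; simp
  smul_add r x y := by show lsmT r (x + y) = lsmT r x + lsmT r y; simp
  add_smul r s z := by
    show lsmT (r + s) z = lsmT r z + lsmT s z
    induction z using TensorR.ind with
    | h0 => simp
    | htp m n =>
        show tp ((r + s) • m) n = tp (r • m) n + tp (s • m) n
        rw [add_smul, tp_add_left]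
    | hadd x y hx hy =>
        rw [map_add, hx, hy, map_add, map_add]; abel
  zero_smul z := by
    show lsmT 0 z = 0
    induction z using TensorR.ind with
    | h0 => simp
    | htp m n => show tp ((0:R) • m) n = 0; rw [zero_smul, tp_zero_left]
    | hadd x y hx hy => rw [map_add, hx, hy, add_zero]

@[simp] theorem lsm_tp (r : R) (m : M) (n : N) :
    r • (tp (R := R) m n : TensorR R M N) = tp (r • m) n := rfl

end Left

section Right
variable [Module Rᵐᵒᵖ N] [SMulCommClass R Rᵐᵒᵖ N]

/-- Right `R`-action on the tensor product, through the right factor. -/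
def rsmT (s : Rᵐᵒᵖ) : TensorR R M N →+ TensorR R M N :=
  mapT (AddMonoidHom.id M) (DistribMulAction.toAddMonoidHom N s)
    (fun _ _ => rfl) (fun r n => (smul_comm r s n).symm)

instance instModRightTensorR : Module Rᵐᵒᵖ (TensorR R M N) where
  smul s z := rsmT s z
  one_smul z := by
    show rsmT 1 z = z
    induction z using TensorR.ind with
    | h0 => simp
    | htp m n => show tp m ((1:Rᵐᵒᵖ) • n) = tp m n; rw [one_smul]
    | hadd x y hx hy => rw [map_add, hx, hy]
  mul_smul r s z := by
    show rsmT (r * s) z = rsmT r (rsmT s z)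
    induction z using TensorR.ind with
    | h0 => simp
    | htp m n => show tp m ((r * s) • n) = tp m (r • s • n); rw [mul_smul]
    | hadd x y hx hy => simp only [map_add, hx, hy]
  smul_zero r := by show rsmT r 0 = 0; simp
  smul_add r x y := by show rsmT r (x + y) = rsmT r x + rsmT r y; simp
  add_smul r s z := by
    show rsmT (r + s) z = rsmT r z + rsmT s z
    induction z using TensorR.ind with
    | h0 => simp
    | htp m n =>
        show tp m ((r + s) • n) = tp m (r • n) + tp m (s • n)
        rw [add_smul, tp_add_right]
    | hadd x y hx hy => rw [map_add, hx, hy, map_add, map_add]; abel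
  zero_smul z := by
    show rsmT 0 z = 0
    induction z using TensorR.ind with
    | h0 => simp
    | htp m n => show tp m ((0:Rᵐᵒᵖ) • n) = 0; rw [zero_smul, tp_zero_right]
    | hadd x y hx hy => rw [map_add, hx, hy, add_zero]

@[simp] theorem rsm_tp (s : Rᵐᵒᵖ) (m : M) (n : N) :
    s • (tp (R := R) m n : TensorR R M N) = tp m (s • n) := rfl

end Right

instance instSMulCommTensorR [Module R M] [SMulCommClass R Rᵐᵒᵖ M]
    [Module Rᵐᵒᵖ N] [SMulCommClass R Rᵐᵒᵖ N] :
    SMulCommClass R Rᵐᵒᵖ (TensorR R M N) where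
  smul_comm r s z := by
    induction z using TensorR.ind with
    | h0 => simp
    | htp m n => rw [rsm_tp, lsm_tp, lsm_tp, rsm_tp]
    | hadd x y hx hy => simp only [smul_add, hx, hy]

end Modules

section Assoc

variable {R : Type} [Ring R]
variable {M N P : Type} [AddCommGroup M] [AddCommGroup N] [AddCommGroup P]
variable [Module Rᵐᵒᵖ M]
variable [Module R N] [Module Rᵐᵒᵖ N] [SMulCommClass R Rᵐᵒᵖ N]
variable [Module R P]

/-- The associator `(M ⊗_R N) ⊗_R P → M ⊗_R (N ⊗_R P)`. -/
def assocT : TensorR R (TensorR R M N) P →+ TensorR R M (TensorR R N P) :=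
  liftT (P := TensorR R M (TensorR R N P))
    (liftT (P := P →+ TensorR R M (TensorR R N P))
      (AddMonoidHom.mk' (fun m => AddMonoidHom.mk'
          (fun n => AddMonoidHom.mk' (fun p => tp (R := R) m (tp (R := R) n p))
            (fun p p' => by (try dsimp only); rw [tp_add_right, tp_add_right]))
          (fun n n' => by
            ext p
            show tp (R := R) m (tp (R := R) (n + n') p) = tp m (tp n p) + tp m (tp n' p)
            rw [tp_add_left, tp_add_right]))
        (fun m m' => by
          ext n p
          show tp (R := R) (m + m') (tp (R := R) n p)
              = tp m (tp n p) + tp m' (tp n p)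
          rw [tp_add_left]))
      (fun r m n => by
        ext p
        show tp (R := R) (op r • m) (tp (R := R) n p) = tp m (tp (r • n) p)
        rw [tp_balance, lsm_tp]))
    (fun r x p => by
      induction x using TensorR.ind with
      | h0 => simp
      | htp m n =>
          rw [rsm_tp]
          show tp (R := R) m (tp (R := R) (op r • n) p) = tp m (tp n (r • p))
          rw [tp_balance]
      | hadd x y hx hy =>
          simp only [smul_add, map_add, AddMonoidHom.add_apply, hx, hy])

@[simp] theorem assocT_tp (m : M) (n : N) (p : P) :
    assocT (R := R) (tp (tp m n) p) = tp m (tp n p) := rfl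

/-- The associator `M ⊗_R (N ⊗_R P) → (M ⊗_R N) ⊗_R P`. -/
def assocT' : TensorR R M (TensorR R N P) →+ TensorR R (TensorR R M N) P :=
  liftT (P := TensorR R (TensorR R M N) P)
    (AddMonoidHom.mk'
      (fun m => liftT (P := TensorR R (TensorR R M N) P)
        (AddMonoidHom.mk' (fun n => AddMonoidHom.mk'
            (fun p => tp (R := R) (tp (R := R) m n) p)
            (fun p p' => by (try dsimp only); rw [tp_add_right]))
          (fun n n' => by
            ext p
            show tp (R := R) (tp (R := R) m (n + n')) p
                = tp (tp m n) p + tp (tp m n') p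
            rw [tp_add_right, tp_add_left]))
        (fun r n p => by
          show tp (R := R) (tp (R := R) m (op r • n)) p = tp (tp m n) (r • p)
          rw [show tp (R := R) m (op r • n) = op r • tp (R := R) m n from
            (rsm_tp _ _ _).symm, tp_balance]))
      (fun m m' => by
        apply TensorR.addHom_ext (R := R)
        intro n p
        show tp (R := R) (tp (R := R) (m + m') n) p
            = tp (tp m n) p + tp (tp m' n) p
        rw [tp_add_left, tp_add_left]))
    (fun r m w => by
      induction w using TensorR.ind with
      | h0 => simp
      | htp n p =>
          show tp (R := R) (tp (R := R) (op r • m) n) p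
              = tp (R := R) (tp (R := R) m (r • n)) p
          rw [tp_balance (R := R) r m n]
      | hadd x y hx hy => rw [smul_add, map_add, hx, hy, map_add])

@[simp] theorem assocT'_tp (m : M) (n : N) (p : P) :
    assocT' (R := R) (tp m (tp n p)) = tp (tp m n) p := rfl

end Assoc

/-- Transport of an additive group along an equality of indices in a family. -/
def fcast {α : Sort*} (F : α → Type) [∀ x, AddCommGroup (F x)] {a b : α} (h : a = b) :
    F a ≃+ F b := by subst h; exact AddEquiv.refl _

@[simp] theorem fcast_rfl {α : Sort*} (F : α → Type) [∀ x, AddCommGroup (F x)] (a : α)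
    (x : F a) : fcast F (rfl : a = a) x = x := rfl

--CHUNK_T_END

--CHUNK_C_BEGIN
section Corings

variable {R : Type} [Ring R]

section Collapse

variable {M C0 : Type} [AddCommGroup M] [AddCommGroup C0]

/-- Collapsing `M ⊗_R C_0 → M` along an identification `ε : C_0 ≅ R`. -/
def rcollapse [Module Rᵐᵒᵖ M] [Module R C0] (e : C0 →+ R)
    (he : ∀ (r : R) (y : C0), e (r • y) = r * e y) : TensorR R M C0 →+ M :=
  liftT₂ (fun m y => (op (e y) : Rᵐᵒᵖ) • m)
    (fun m m' y => smul_add _ m m')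
    (fun m y y' => by (try dsimp only); rw [map_add, ← add_smul, op_add])
    (fun r m y => by
      try dsimp only
      rw [← mul_smul, he, ← op_mul])

/-- Collapsing `C_0 ⊗_R M → M` along an identification `ε : C_0 ≅ R`. -/
def lcollapse [Module R M] [Module Rᵐᵒᵖ C0] (e : C0 →+ R)
    (he : ∀ (s : Rᵐᵒᵖ) (y : C0), e (s • y) = e y * s.unop) : TensorR R C0 M →+ M :=
  liftT₂ (fun y m => e y • m)
    (fun y y' m => by (try dsimp only); rw [map_add, ← add_smul])
    (fun y m m' => smul_add _ m m')
    (fun r y m => by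
      try dsimp only
      rw [he, ← mul_smul, unop_op])

end Collapse

variable (R)

/-- A connected graded `R`-coring: a positively graded coalgebra in the monoidal
category of `R`-bimodules whose degree-zero component is `R` itself (via the
counit isomorphism `ε`). -/
structure ConnCoring where
  C : ℕ → Type
  [acg : ∀ n, AddCommGroup (C n)]
  [modL : ∀ n, Module R (C n)]
  [modR : ∀ n, Module Rᵐᵒᵖ (C n)]
  [scomm : ∀ n, SMulCommClass R Rᵐᵒᵖ (C n)]
  Δ : ∀ p q, C (p + q) →+ TensorR R (C p) (C q)
  Δ_lsmul : ∀ (p q : ℕ) (r : R) (x : C (p + q)), Δ p q (r • x) = r • Δ p q x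
  Δ_rsmul : ∀ (p q : ℕ) (s : Rᵐᵒᵖ) (x : C (p + q)), Δ p q (s • x) = s • Δ p q x
  ε : C 0 ≃+ R
  ε_lsmul : ∀ (r : R) (x : C 0), ε (r • x) = r * ε x
  ε_rsmul : ∀ (s : Rᵐᵒᵖ) (x : C 0), ε (s • x) = ε x * s.unop
  counit_right : ∀ (n : ℕ) (x : C (n + 0)),
    rcollapse ε.toAddMonoidHom ε_lsmul (Δ n 0 x) = x
  counit_left : ∀ (n : ℕ) (x : C (0 + n)),
    lcollapse ε.toAddMonoidHom ε_rsmul (Δ 0 n x) = fcast C (Nat.zero_add n) x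
  grouplike : Δ 0 0 (ε.symm 1) = tp (ε.symm 1) (ε.symm 1)
  coassoc : ∀ (p q r : ℕ) (x : C (p + q + r)),
    assocT (mapT (Δ p q) (AddMonoidHom.id (C r))
        (fun s y => Δ_rsmul p q (op s) y) (fun _ _ => rfl)
      (Δ (p + q) r x))
    = mapT (AddMonoidHom.id (C p)) (Δ q r) (fun _ _ => rfl)
        (fun s y => Δ_lsmul q r s y)
      (Δ p (q + r) (fcast C (Nat.add_assoc p q r) x))

attribute [instance] ConnCoring.acg ConnCoring.modL ConnCoring.modR ConnCoring.scomm

variable {R}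

/-- A connected coring is strongly graded when all components of the
comultiplication are injective. -/
def ConnCoring.StronglyGraded (C : ConnCoring R) : Prop :=
  ∀ p q, Function.Injective (C.Δ p q)

/-- The element `1 ∈ R = C_0` of a connected coring. -/
def ConnCoring.one (C : ConnCoring R) : C.C 0 := C.ε.symm 1

/-- An element `x = ∑ₖ xₖ` of a connected coring (given by its homogeneous
components) is primitive if `Δ x = x ⊗ 1 + 1 ⊗ x`, written out componentwise. -/
def ConnCoring.IsPrimitive (C : ConnCoring R) (x : ⨁ n, C.C n) : Prop :=
  (C.Δ 0 0 (x 0) = tp (x 0) C.one + tp C.one (x 0)) ∧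
  (∀ k : ℕ, 0 < k → C.Δ k 0 (x (k + 0)) = tp (x k) C.one) ∧
  (∀ k : ℕ, 0 < k → C.Δ 0 k (x (0 + k)) = tp C.one (x k)) ∧
  (∀ p q : ℕ, 0 < p → 0 < q → C.Δ p q (x (p + q)) = 0)

/-- A morphism of connected graded `R`-corings. -/
structure CoringMor (C D : ConnCoring R) where
  f : ∀ n, C.C n →+ D.C n
  f_lsmul : ∀ (n : ℕ) (r : R) (x : C.C n), f n (r • x) = r • f n x
  f_rsmul : ∀ (n : ℕ) (s : Rᵐᵒᵖ) (x : C.C n), f n (s • x) = s • f n x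
  f_counit : ∀ x : C.C 0, D.ε (f 0 x) = C.ε x
  f_comul : ∀ (p q : ℕ) (x : C.C (p + q)),
    D.Δ p q (f (p + q) x)
      = mapT (f p) (f q) (fun s y => f_rsmul p (op s) y) (fun s y => f_lsmul q s y)
          (C.Δ p q x)

end Corings
--CHUNK_C_END

/-! Since `R` and `Rᵐᵒᵖ` are semisimple, every injective one-sided module map splits, so tensoring
with it stays injective. Coassociativity then relates the components `Δ_{p,q}` of a fixed
degree `n` through components of smaller total degree: if all those are injective and one
`Δ_{p,q}` (with `p, q > 0`) kills `c ∈ C_n`, then all of them do, i.e. `c` is primitive.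
Hence if `P(C) = C_1`, induction on `n` makes every `Δ_{p,q}` injective; conversely, in a
strongly graded coring a primitive element has no component of degree `n ≥ 2`, as
`Δ_{1,n-1}` kills it. -/

theorem fcast_directSum_apply {F : ℕ → Type} [∀ n, AddCommGroup (F n)]
    (x : ⨁ n, F n) {a b : ℕ} (h : a = b) : fcast F h (x a) = x b := by
  subst h; rfl

section TensorInjective

variable {R : Type} [Ring R]
variable {M N M' N' : Type} [AddCommGroup M] [AddCommGroup N] [AddCommGroup M'] [AddCommGroup N']
variable [Module Rᵐᵒᵖ M] [Module R N] [Module Rᵐᵒᵖ M'] [Module R N']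

theorem mapT_leftInverse {f : M →+ M'} {g : N →+ N'} {f' : M' →+ M} {g' : N' →+ N}
    (hf : ∀ (r : R) (m : M), f (op r • m) = op r • f m)
    (hg : ∀ (r : R) (n : N), g (r • n) = r • g n)
    (hf' : ∀ (r : R) (m : M'), f' (op r • m) = op r • f' m)
    (hg' : ∀ (r : R) (n : N'), g' (r • n) = r • g' n)
    (hff' : Function.LeftInverse f' f) (hgg' : Function.LeftInverse g' g) :
    Function.LeftInverse (mapT f' g' hf' hg') (mapT f g hf hg) := by
  intro z
  induction z using TensorR.ind with
  | h0 => simp only [map_zero]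
  | htp m n => simp only [mapT_tp, hff' m, hgg' n]
  | hadd x y hx hy => simp only [map_add, hx, hy]

theorem mapT_injective [IsSemisimpleRing R] (f : M →+ M') (g : N →+ N')
    (hf : ∀ (r : R) (m : M), f (op r • m) = op r • f m)
    (hg : ∀ (r : R) (n : N), g (r • n) = r • g n)
    (hf_inj : Function.Injective f) (hg_inj : Function.Injective g) :
    Function.Injective (mapT f g hf hg) := by
  let fₗ : M →ₗ[Rᵐᵒᵖ] M' := { f with map_smul' := fun s m => hf s.unop m }
  let gₗ : N →ₗ[R] N' := { g with map_smul' := hg }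
  obtain ⟨f', hf'⟩ := IsSemisimpleModule.extension_property fₗ hf_inj LinearMap.id
  obtain ⟨g', hg'⟩ := IsSemisimpleModule.extension_property gₗ hg_inj LinearMap.id
  refine (mapT_leftInverse (f' := f'.toAddMonoidHom) (g' := g'.toAddMonoidHom) hf hg
    (fun r m => f'.map_smul (op r) m) g'.map_smul ?_ ?_).injective
  · exact fun m => LinearMap.congr_fun hf' m
  · exact fun n => LinearMap.congr_fun hg' n

variable {P : Type} [AddCommGroup P] [Module Rᵐᵒᵖ N] [SMulCommClass R Rᵐᵒᵖ N] [Module R P]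

theorem assocT_injective : Function.Injective (assocT (R := R) (M := M) (N := N) (P := P)) := by
  refine Function.LeftInverse.injective (g := assocT') fun z => ?_
  induction z using TensorR.ind with
  | h0 => simp only [map_zero]
  | htp w p =>
      induction w using TensorR.ind with
      | h0 => simp only [tp_zero_left, map_zero]
      | htp m n => rfl
      | hadd x y hx hy => rw [tp_add_left, map_add, map_add, hx, hy]
  | hadd x y hx hy => rw [map_add, map_add, hx, hy]

end TensorInjective

namespace ConnCoring

variable {R : Type} [Ring R] (C : ConnCoring R)

section Counit

variable {M : Type} [AddCommGroup M]

theorem rcollapse_tp_one [Module Rᵐᵒᵖ M] (m : M) :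
    rcollapse C.ε.toAddMonoidHom C.ε_lsmul (tp m C.one) = m := by
  show (op (C.ε C.one) : Rᵐᵒᵖ) • m = m
  rw [ConnCoring.one, AddEquiv.apply_symm_apply, op_one, one_smul]

theorem lcollapse_tp_one [Module R M] (m : M) :
    lcollapse C.ε.toAddMonoidHom C.ε_rsmul (tp C.one m) = m := by
  show C.ε C.one • m = m
  rw [ConnCoring.one, AddEquiv.apply_symm_apply, one_smul]

theorem tp_rcollapse_one [Module Rᵐᵒᵖ M] (z : TensorR R M (C.C 0)) :
    tp (rcollapse C.ε.toAddMonoidHom C.ε_lsmul z) C.one = z := by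
  induction z using TensorR.ind with
  | h0 => rw [map_zero, tp_zero_left]
  | htp m y =>
      show tp ((op (C.ε y) : Rᵐᵒᵖ) • m) C.one = tp m y
      rw [tp_balance]
      congr 1
      apply C.ε.injective
      rw [C.ε_lsmul, ConnCoring.one, AddEquiv.apply_symm_apply, mul_one]
  | hadd a b ha hb => rw [map_add, tp_add_left, ha, hb]

theorem tp_one_lcollapse [Module R M] (z : TensorR R (C.C 0) M) :
    tp C.one (lcollapse C.ε.toAddMonoidHom C.ε_rsmul z) = z := by
  induction z using TensorR.ind with
  | h0 => rw [map_zero, tp_zero_right]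
  | htp y m =>
      show tp C.one (C.ε y • m) = tp y m
      rw [← tp_balance]
      congr 1
      apply C.ε.injective
      rw [C.ε_rsmul, ConnCoring.one, AddEquiv.apply_symm_apply, unop_op, one_mul]
  | hadd a b ha hb => rw [map_add, tp_add_right, ha, hb]

end Counit

theorem Δ_zero_right (n : ℕ) (x : C.C n) : C.Δ n 0 x = tp x C.one := by
  rw [← C.tp_rcollapse_one (C.Δ n 0 x), C.counit_right n x]

theorem Δ_zero_left (n : ℕ) (x : C.C (0 + n)) :
    C.Δ 0 n x = tp C.one (fcast C.C (Nat.zero_add n) x) := by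
  rw [← C.tp_one_lcollapse (C.Δ 0 n x), C.counit_left n x]

theorem Δ_zero_right_injective (n : ℕ) : Function.Injective (C.Δ n 0) := by
  intro a b hab
  rw [Δ_zero_right, Δ_zero_right] at hab
  simpa only [rcollapse_tp_one] using congrArg (rcollapse C.ε.toAddMonoidHom C.ε_lsmul) hab

theorem Δ_zero_left_injective (n : ℕ) : Function.Injective (C.Δ 0 n) := by
  intro a b hab
  rw [Δ_zero_left, Δ_zero_left] at hab
  have := congrArg (lcollapse C.ε.toAddMonoidHom C.ε_rsmul) hab
  rw [lcollapse_tp_one, lcollapse_tp_one] at this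
  exact (fcast C.C (Nat.zero_add n)).injective this

theorem isPrimitive_iff (x : ⨁ n, C.C n) :
    C.IsPrimitive x ↔ x 0 = 0 ∧ ∀ p q : ℕ, 0 < p → 0 < q → C.Δ p q (x (p + q)) = 0 := by
  constructor
  · rintro ⟨h0, -, -, hpq⟩
    refine ⟨?_, hpq⟩
    rw [Δ_zero_right, left_eq_add] at h0
    simpa only [lcollapse_tp_one, map_zero] using
      congrArg (lcollapse C.ε.toAddMonoidHom C.ε_rsmul) h0
  · rintro ⟨h0, hpq⟩
    refine ⟨by simp [h0], fun k _ => C.Δ_zero_right k _, fun k _ => ?_, hpq⟩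
    rw [Δ_zero_left, fcast_directSum_apply]

variable {C}

theorem StronglyGraded.isPrimitive_iff (hC : C.StronglyGraded) (x : ⨁ n, C.C n) :
    C.IsPrimitive x ↔ ∀ n : ℕ, n ≠ 1 → x n = 0 := by
  rw [C.isPrimitive_iff]
  constructor
  · rintro ⟨h0, hpq⟩ (_ | _ | n) hn
    · exact h0
    · exact absurd rfl hn
    · have hx : x (1 + (n + 1)) = 0 :=
        hC 1 (n + 1) ((hpq 1 (n + 1) one_pos n.succ_pos).trans (map_zero _).symm)
      rw [← fcast_directSum_apply x (by omega : 1 + (n + 1) = n + 2), hx, map_zero]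
  · intro hx
    exact ⟨hx 0 (by omega), fun p q _ _ => by rw [hx (p + q) (by omega), map_zero]⟩

variable [IsSemisimpleRing R]

theorem Δ_eq_zero_of_Δ_add_left_eq_zero {p s q : ℕ} (hsq : Function.Injective (C.Δ s q))
    {x : ⨁ n, C.C n} (hx : C.Δ (p + s) q (x (p + s + q)) = 0) :
    C.Δ p (s + q) (x (p + (s + q))) = 0 := by
  have hco := C.coassoc p s q (x (p + s + q))
  rw [hx, map_zero, map_zero, fcast_directSum_apply] at hco
  exact mapT_injective (AddMonoidHom.id _) (C.Δ s q) (fun _ _ => rfl) (C.Δ_lsmul s q)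
    Function.injective_id hsq (hco.symm.trans (map_zero _).symm)

theorem Δ_add_left_eq_zero_of_Δ_eq_zero {p s q : ℕ} (hps : Function.Injective (C.Δ p s))
    {x : ⨁ n, C.C n} (hx : C.Δ p (s + q) (x (p + (s + q))) = 0) :
    C.Δ (p + s) q (x (p + s + q)) = 0 := by
  have hco := C.coassoc p s q (x (p + s + q))
  rw [fcast_directSum_apply, hx, map_zero, ← map_zero assocT] at hco
  exact mapT_injective (C.Δ p s) (AddMonoidHom.id _) (fun r => C.Δ_rsmul p s (op r))
    (fun _ _ => rfl) hps Function.injective_id ((assocT_injective hco).trans (map_zero _).symm)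

theorem Δ_eq_zero_of_Δ_eq_zero
    {p q : ℕ} (hlow : ∀ a b, a + b < p + q → Function.Injective (C.Δ a b))
    {x : ⨁ n, C.C n} (hx : C.Δ p q (x (p + q)) = 0)
    {p' q' : ℕ} (hp' : 0 < p') (hq' : 0 < q') (hpq : p' + q' = p + q) :
    C.Δ p' q' (x (p' + q')) = 0 := by
  rcases lt_trichotomy p' p with hlt | rfl | hgt
  · obtain ⟨s, rfl⟩ : ∃ s, p = p' + s := ⟨p - p', by omega⟩
    obtain rfl : q' = s + q := by omega
    exact Δ_eq_zero_of_Δ_add_left_eq_zero (hlow s q (by omega)) hx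
  · obtain rfl : q' = q := by omega
    exact hx
  · obtain ⟨s, rfl⟩ : ∃ s, p' = p + s := ⟨p' - p, by omega⟩
    obtain rfl : q = s + q' := by omega
    exact Δ_add_left_eq_zero_of_Δ_eq_zero (hlow p s (by omega)) hx

theorem isPrimitive_of_Δ_eq_zero
    {p q : ℕ} (hlow : ∀ a b, a + b < p + q → Function.Injective (C.Δ a b))
    (hp : 0 < p) {c : C.C (p + q)} (hc : C.Δ p q c = 0) :
    C.IsPrimitive (DirectSum.of _ (p + q) c) := by
  refine C.isPrimitive_iff _ |>.2 ⟨DirectSum.of_eq_of_ne _ _ _ (by omega), fun p' q' hp' hq' => ?_⟩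
  by_cases hpq : p' + q' = p + q
  · refine Δ_eq_zero_of_Δ_eq_zero hlow ?_ hp' hq' hpq
    rwa [DirectSum.of_eq_same]
  · rw [DirectSum.of_eq_of_ne _ _ _ hpq, map_zero]

theorem stronglyGraded_of_isPrimitive
    (H : ∀ x : ⨁ n, C.C n, C.IsPrimitive x → ∀ n : ℕ, n ≠ 1 → x n = 0) :
    C.StronglyGraded := by
  suffices ∀ n p q, p + q = n → Function.Injective (C.Δ p q) from fun p q => this _ p q rfl
  intro n
  induction n using Nat.strong_induction_on with
  | _ n IH =>
    rintro p q rfl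
    rcases Nat.eq_zero_or_pos q with rfl | hq
    · exact C.Δ_zero_right_injective p
    rcases Nat.eq_zero_or_pos p with rfl | hp
    · exact C.Δ_zero_left_injective q
    refine (injective_iff_map_eq_zero _).2 fun c hc => ?_
    have hprim := isPrimitive_of_Δ_eq_zero (fun a b hab => IH _ hab a b rfl) hp hc
    simpa only [DirectSum.of_eq_same] using H _ hprim (p + q) (by omega)

end ConnCoring

/-- Let `R` be a semisimple ring and `C` a connected `R`-coring.
Then `C` is strongly graded (all components `Δ_{p,q} : C_{p+q} → C_p ⊗_R C_q` of
the comultiplication are injective) if and only if the set of primitive elements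
of `C` coincides with the homogeneous component `C_1`. -/
theorem strongly_graded_iff_primitives
    (R : Type) [Ring R] (hR : IsSemisimpleRing R) (C : ConnCoring R) :
    C.StronglyGraded ↔
      (∀ x : ⨁ n, C.C n, C.IsPrimitive x ↔ ∀ n : ℕ, n ≠ 1 → x n = 0) :=
  ⟨fun hC x => hC.isPrimitive_iff x,
    fun H => ConnCoring.stronglyGraded_of_isPrimitive fun x => (H x).1⟩
end P1605
end
end

section
/- Let R and S be semisimple rings, A a connected R-ring and B a connected S-ring. Then the connected R×S-ring A × B is Koszul if and only if both A and B are Koszul. -/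
/-!
The central idempotents `(1, 0)` and `(0, 1)` of `A × B` have degree zero, so every graded
`A × B`-module `P` splits as `(1, 0) • P × (0, 1) • P`, a graded `A`-module times a graded
`B`-module, and this splitting preserves projectivity, exactness and generation in a given degree.
Hence a Koszul resolution of `R × S` over `A × B` cuts down to Koszul resolutions of `R` over `A`
and of `S` over `B` (the second by swapping the factors), and conversely the factorwise product of
such resolutions is a Koszul resolution over `A × B`.
-/

noncomputable section
open MulOpposite
open scoped DirectSum

namespace P1605

--CHUNK_G_BEGIN
section GradedRings

variable (R : Type) [Ring R]

/-- A connected graded `R`-ring: a ring `A` together with an `ℕ`-grading by additive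
subgroups whose degree-zero part is a copy of `R` (via `emb`), with the multiplicative
grading property.  The (unique) augmentation `A → R` is part of the data. -/
structure GRing (A : Type) [Ring A] where
  emb : R →+* A
  aug : A →+* R
  deg : ℕ → AddSubgroup A
  internal : DirectSum.IsInternal deg
  emb_mem : ∀ r : R, emb r ∈ deg 0
  emb_surj : ∀ x ∈ deg 0, ∃ r : R, emb r = x
  emb_inj : Function.Injective emb
  mul_mem : ∀ {p q : ℕ} {x y : A}, x ∈ deg p → y ∈ deg q → x * y ∈ deg (p + q)
  aug_emb : ∀ r : R, aug (emb r) = r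
  aug_deg : ∀ (n : ℕ), ∀ x ∈ deg (n + 1), aug x = 0

variable {R}

/-- A connected graded ring is strongly graded when every multiplication map
`A_p ⊗ A_q → A_{p+q}` is surjective, i.e. each element of `A_{p+q}` is a sum of
products of elements of degrees `p` and `q`. -/
def GRing.StronglyGraded {A : Type} [Ring A] (G : GRing R A) : Prop :=
  ∀ p q : ℕ, ∀ z ∈ G.deg (p + q),
    z ∈ AddSubgroup.closure {w : A | ∃ x ∈ G.deg p, ∃ y ∈ G.deg q, w = x * y}

/-- A grading, compatible with a graded ring `G`, on an `A`-module `M`. -/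
structure GMod {A : Type} [Ring A] (G : GRing R A) (M : Type) [AddCommGroup M]
    [Module A M] where
  deg : ℕ → AddSubgroup M
  internal : DirectSum.IsInternal deg
  smul_mem : ∀ {p d : ℕ} {a : A} {x : M}, a ∈ G.deg p → x ∈ deg d → a • x ∈ deg (p + d)

/-- A resolution of `R` by projective graded left `A`-modules, in which the `n`-th
module is generated by its homogeneous component of degree `n`.  Existence of such a
resolution is the definition of Koszulity. -/
structure KResolution {A : Type} [Ring A] (G : GRing R A) where
  P : ℕ → Type
  [acg : ∀ n, AddCommGroup (P n)]
  [mod : ∀ n, Module A (P n)]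
  proj : ∀ n, Module.Projective A (P n)
  g : ∀ n, ℕ → AddSubgroup (P n)
  internal : ∀ n, DirectSum.IsInternal (g n)
  smul_mem : ∀ (n : ℕ) {p d : ℕ} {a : A} {x : P n},
    a ∈ G.deg p → x ∈ g n d → a • x ∈ g n (p + d)
  f : ∀ n, P (n + 1) →+ P n
  f_linear : ∀ (n : ℕ) (a : A) (x : P (n + 1)), f n (a • x) = a • f n x
  f_graded : ∀ (n d : ℕ), ∀ x ∈ g (n + 1) d, f n x ∈ g n d
  eps : P 0 →+ R
  eps_linear : ∀ (a : A) (x : P 0), eps (a • x) = G.aug a * eps x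
  eps_surj : Function.Surjective eps
  eps_graded : ∀ (d : ℕ), ∀ x ∈ g 0 (d + 1), eps x = 0
  comp0 : ∀ x : P 1, eps (f 0 x) = 0
  exact0 : ∀ x : P 0, eps x = 0 → x ∈ Set.range (f 0)
  comp : ∀ (n : ℕ) (x : P (n + 2)), f n (f (n + 1) x) = 0
  exact : ∀ (n : ℕ) (x : P (n + 1)), f n x = 0 → x ∈ Set.range (f (n + 1))
  gen : ∀ (n : ℕ) (x : P n),
    x ∈ AddSubgroup.closure {z : P n | ∃ (a : A), ∃ y ∈ g n n, z = a • y}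

/-- A connected graded `R`-ring is Koszul if `R` admits a resolution by projective
graded left `A`-modules such that the `n`-th module is generated in degree `n`. -/
def GRing.IsKoszul {A : Type} [Ring A] (G : GRing R A) : Prop :=
  Nonempty (KResolution G)

end GradedRings
--CHUNK_G_END

attribute [local instance] KResolution.acg KResolution.mod

section GradedSubgroups

variable {ι M N : Type} [DecidableEq ι] [AddCommGroup M] [AddCommGroup N]
  {gM : ι → AddSubgroup M} {gN : ι → AddSubgroup N}

def gradedMap (f : M →+ N) (hf : ∀ i, ∀ x ∈ gM i, f x ∈ gN i) :
    (⨁ i, gM i) →+ ⨁ i, gN i :=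
  DirectSum.map fun i => (f.comp (gM i).subtype).codRestrict (gN i) fun x => hf i x x.2

lemma coeAddMonoidHom_gradedMap (f : M →+ N) (hf : ∀ i, ∀ x ∈ gM i, f x ∈ gN i)
    (w : ⨁ i, gM i) :
    DirectSum.coeAddMonoidHom gN (gradedMap f hf w) = f (DirectSum.coeAddMonoidHom gM w) := by
  induction w using DirectSum.induction_on with
  | zero => simp
  | of i x => simp only [gradedMap, DirectSum.map_of, DirectSum.coeAddMonoidHom_of]; rfl
  | add x y hx hy => simp only [map_add, hx, hy]

lemma _root_.DirectSum.IsInternal.of_retract (hM : DirectSum.IsInternal gM)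
    (i : N →+ M) (r : M →+ N) (hi : ∀ k, ∀ x ∈ gN k, i x ∈ gM k)
    (hr : ∀ k, ∀ x ∈ gM k, r x ∈ gN k) (hri : ∀ x, r (i x) = x) :
    DirectSum.IsInternal gN := by
  have hi_inj : Function.Injective i := Function.LeftInverse.injective hri
  refine ⟨fun w w' hw => ?_, fun x => ⟨gradedMap r hr (hM.surjective (i x)).choose, ?_⟩⟩
  · have hmap : Function.Injective (gradedMap i hi) :=
      (DirectSum.map_injective _).2 fun k x y hxy => Subtype.ext (hi_inj congr(($hxy : M)))
    refine hmap (hM.injective ?_)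
    rw [coeAddMonoidHom_gradedMap, coeAddMonoidHom_gradedMap, hw]
  · rw [coeAddMonoidHom_gradedMap, (hM.surjective (i x)).choose_spec, hri]

lemma _root_.DirectSum.IsInternal.prod (hM : DirectSum.IsInternal gM)
    (hN : DirectSum.IsInternal gN) : DirectSum.IsInternal fun i => (gM i).prod (gN i) := by
  have hfst : ∀ i, ∀ x ∈ (gM i).prod (gN i), AddMonoidHom.fst M N x ∈ gM i := fun _ _ h => h.1
  have hsnd : ∀ i, ∀ x ∈ (gM i).prod (gN i), AddMonoidHom.snd M N x ∈ gN i := fun _ _ h => h.2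
  have hinl : ∀ i, ∀ x ∈ gM i, AddMonoidHom.inl M N x ∈ (gM i).prod (gN i) :=
    fun i _ h => ⟨h, (gN i).zero_mem⟩
  have hinr : ∀ i, ∀ x ∈ gN i, AddMonoidHom.inr M N x ∈ (gM i).prod (gN i) :=
    fun i _ h => ⟨(gM i).zero_mem, h⟩
  constructor
  · intro w w' hw
    have h1 := hM.injective (a₁ := gradedMap _ hfst w) (a₂ := gradedMap _ hfst w')
      (by rw [coeAddMonoidHom_gradedMap, coeAddMonoidHom_gradedMap, hw])
    have h2 := hN.injective (a₁ := gradedMap _ hsnd w) (a₂ := gradedMap _ hsnd w')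
      (by rw [coeAddMonoidHom_gradedMap, coeAddMonoidHom_gradedMap, hw])
    ext i
    · exact congr((($h1 i : gM i) : M))
    · exact congr((($h2 i : gN i) : N))
  · intro x
    obtain ⟨u, hu⟩ := hM.surjective x.1
    obtain ⟨v, hv⟩ := hN.surjective x.2
    refine ⟨gradedMap _ hinl u + gradedMap _ hinr v, ?_⟩
    rw [map_add, coeAddMonoidHom_gradedMap, coeAddMonoidHom_gradedMap, hu, hv]
    simp

end GradedSubgroups

theorem _root_.AddMonoidHom.apply_mem_closure {M M' : Type} [AddGroup M] [AddGroup M']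
    (φ : M →+ M') {s : Set M} {t : Set M'} (h : ∀ z ∈ s, φ z ∈ t) {x : M}
    (hx : x ∈ AddSubgroup.closure s) : φ x ∈ AddSubgroup.closure t :=
  AddSubgroup.closure_mono (Set.image_subset_iff.2 h)
    (φ.map_closure s ▸ AddSubgroup.mem_map_of_mem φ hx)

/- The splitting of `Q` pushes the coefficients of a splitting of `P` forward along `φ`;
`hφψ` is what makes it `Λ'`-linear, so `ψ` need not be additive. -/
theorem _root_.Module.Projective.of_semilinearRetract {Λ Λ' P Q : Type} [Ring Λ] [Ring Λ']
    [AddCommGroup P] [Module Λ P] [AddCommGroup Q] [Module Λ' Q] [Module.Projective Λ P]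
    (φ : Λ →+ Λ') (ψ : Λ' → Λ) (hφψ : ∀ a c, φ (ψ a * c) = a * φ c)
    (i : Q →+ P) (r : P →+ Q) (hi : ∀ (a : Λ') q, i (a • q) = ψ a • i q)
    (hr : ∀ (c : Λ) p, r (c • p) = φ c • r p) (hri : ∀ q, r (i q) = q) :
    Module.Projective Λ' Q := by
  obtain ⟨s, hs⟩ := Module.projective_def.1 ‹Module.Projective Λ P›
  let t : (P →₀ Λ) →+ (Q →₀ Λ') :=
    (Finsupp.mapRange.addMonoidHom φ).comp (Finsupp.mapDomain.addMonoidHom r)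
  have ht (f : P →₀ Λ) :
      Finsupp.linearCombination Λ' id (t f) = r (Finsupp.linearCombination Λ id f) := by
    induction f using Finsupp.induction_linear with
    | zero => simp
    | add f g hf hg => simp only [map_add, hf, hg]
    | single p c => simp [t, hr]
  refine Module.projective_def.2 ⟨
    { toFun := fun q => t (s (i q))
      map_add' := fun q q' => by simp only [map_add]
      map_smul' := fun a q => ?_ },
    fun q => by simp only [LinearMap.coe_mk, AddHom.coe_mk, ht, hs _, hri]⟩
  ext p
  simp [t, hi, Finsupp.mapDomain_smul, hφψ]

section ProductModule

variable {A B M N : Type} [Ring A] [Ring B] [AddCommGroup M] [AddCommGroup N]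
  [Module A M] [Module B N]

-- Not a global instance: for `M = A` and `N = B` it would compete with `Semiring.toModule`.
abbrev prodModule : Module (A × B) (M × N) :=
  letI := Module.compHom M (RingHom.fst A B)
  letI := Module.compHom N (RingHom.snd A B)
  inferInstance

attribute [local instance] prodModule

lemma prod_smul_prod (c : A × B) (x : M × N) : c • x = (c.1 • x.1, c.2 • x.2) := rfl

theorem projective_prodModule [Module.Projective A M] [Module.Projective B N] :
    Module.Projective (A × B) (M × N) :=
  letI := Module.compHom M (RingHom.fst A B)
  letI := Module.compHom N (RingHom.snd A B)
  haveI : Module.Projective (A × B) M :=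
    .of_semilinearRetract (AddMonoidHom.inl A B) Prod.fst (fun _ _ => by ext <;> simp)
      (.id M) (.id M) (fun _ _ => rfl) (fun _ _ => rfl) (fun _ => rfl)
  haveI : Module.Projective (A × B) N :=
    .of_semilinearRetract (AddMonoidHom.inr A B) Prod.snd (fun _ _ => by ext <;> simp)
      (.id N) (.id N) (fun _ _ => rfl) (fun _ _ => rfl) (fun _ => rfl)
  inferInstance

end ProductModule

section FirstFactor

variable (A B : Type) [Ring A] [Ring B] (P : Type) [AddCommGroup P] [Module (A × B) P]

def fstPart : AddSubgroup P :=
  (DistribSMul.toAddMonoidHom P ((1, 0) : A × B)).eqLocus (AddMonoidHom.id P)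

variable {A B P} {Q : Type} [AddCommGroup Q] [Module (A × B) Q]

lemma mem_fstPart {x : P} : x ∈ fstPart A B P ↔ ((1, 0) : A × B) • x = x := Iff.rfl

lemma smul_mem_fstPart (a : A) (x : P) : ((a, 0) : A × B) • x ∈ fstPart A B P := by
  rw [mem_fstPart, smul_smul, Prod.mk_mul_mk, one_mul, mul_zero]

instance : Module A (fstPart A B P) where
  smul a x := ⟨((a, 0) : A × B) • (x : P), smul_mem_fstPart a (x : P)⟩
  one_smul x := Subtype.ext x.2
  mul_smul a a' x := Subtype.ext <| by
    change ((a * a', 0) : A × B) • (x : P) = ((a, 0) : A × B) • ((a', 0) : A × B) • (x : P)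
    rw [smul_smul, Prod.mk_mul_mk, mul_zero]
  smul_zero _ := Subtype.ext (smul_zero _)
  smul_add _ _ _ := Subtype.ext (smul_add _ _ _)
  add_smul a a' x := Subtype.ext <| by
    change ((a + a', 0) : A × B) • (x : P)
      = ((a, 0) : A × B) • (x : P) + ((a', 0) : A × B) • (x : P)
    rw [← add_smul, Prod.mk_add_mk, add_zero]
  zero_smul x := Subtype.ext (zero_smul (A × B) (x : P))

lemma coe_fstPart_smul (a : A) (x : fstPart A B P) :
    ((a • x : fstPart A B P) : P) = ((a, 0) : A × B) • (x : P) := rfl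

variable (A B) in
def fstProj : P →+ fstPart A B P :=
  (DistribSMul.toAddMonoidHom P ((1, 0) : A × B)).codRestrict _ (smul_mem_fstPart 1)

lemma coe_fstProj (x : P) : (fstProj A B x : P) = ((1, 0) : A × B) • x := rfl

lemma fstProj_of_mem (x : fstPart A B P) : fstProj A B (x : P) = x := Subtype.ext x.2

lemma fstProj_smul (c : A × B) (x : P) : fstProj A B (c • x) = c.1 • fstProj A B x := by
  ext
  rw [coe_fstPart_smul, coe_fstProj, coe_fstProj, smul_smul, smul_smul]
  congr 1
  ext <;> simp

theorem projective_fstPart [Module.Projective (A × B) P] :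
    Module.Projective A (fstPart A B P) :=
  .of_semilinearRetract (AddMonoidHom.fst A B) (fun a => (a, 0)) (fun _ _ => by simp)
    (fstPart A B P).subtype (fstProj A B) (fun _ _ => rfl) fstProj_smul fstProj_of_mem

def fstPartMap (f : P →+ Q) : fstPart A B P →+ fstPart A B Q :=
  (fstProj A B).comp (f.comp (fstPart A B P).subtype)

lemma coe_fstPartMap {f : P →+ Q} (hf : ∀ (c : A × B) x, f (c • x) = c • f x)
    (x : fstPart A B P) : (fstPartMap f x : Q) = f x := by
  rw [fstPartMap, AddMonoidHom.comp_apply, coe_fstProj, AddMonoidHom.comp_apply, ← hf]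
  exact congrArg f x.2

lemma mem_range_fstPartMap {f : P →+ Q} (hf : ∀ (c : A × B) x, f (c • x) = c • f x)
    {x : fstPart A B Q} (hx : (x : Q) ∈ Set.range f) : x ∈ Set.range (fstPartMap f) := by
  obtain ⟨y, hy⟩ := hx
  refine ⟨fstProj A B y, Subtype.ext ?_⟩
  rw [coe_fstPartMap hf, coe_fstProj, hf, hy]
  exact x.2

end FirstFactor

section Product

variable {R S A B : Type} [Ring R] [Ring S] [Ring A] [Ring B]

lemma GRing.one_mem_deg_zero (G : GRing R A) : (1 : A) ∈ G.deg 0 :=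
  map_one G.emb ▸ G.emb_mem 1

def GRing.prod (GA : GRing R A) (GB : GRing S B) : GRing (R × S) (A × B) where
  emb := GA.emb.prodMap GB.emb
  aug := GA.aug.prodMap GB.aug
  deg n := (GA.deg n).prod (GB.deg n)
  internal := GA.internal.prod GB.internal
  emb_mem r := ⟨GA.emb_mem r.1, GB.emb_mem r.2⟩
  emb_surj x hx := by
    obtain ⟨r, hr⟩ := GA.emb_surj x.1 hx.1
    obtain ⟨s, hs⟩ := GB.emb_surj x.2 hx.2
    exact ⟨(r, s), Prod.ext hr hs⟩
  emb_inj := GA.emb_inj.prodMap GB.emb_inj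
  mul_mem hx hy := ⟨GA.mul_mem hx.1 hy.1, GB.mul_mem hx.2 hy.2⟩
  aug_emb r := Prod.ext (GA.aug_emb r.1) (GB.aug_emb r.2)
  aug_deg n x hx := Prod.ext (GA.aug_deg n x.1 hx.1) (GB.aug_deg n x.2 hx.2)

def KResolution.congr {G G' : GRing R A} (h_deg : ∀ n, G.deg n = G'.deg n)
    (h_aug : G.aug = G'.aug) (C : KResolution G) : KResolution G' :=
  { C with
    smul_mem := fun n _ _ _ _ ha hx => C.smul_mem n (by rwa [h_deg]) hx
    eps_linear := fun a x => by rw [← h_aug]; exact C.eps_linear a x }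

theorem GRing.isKoszul_congr {G G' : GRing R A} (h_deg : ∀ n, G.deg n = G'.deg n)
    (h_aug : G.aug = G'.aug) : G.IsKoszul ↔ G'.IsKoszul :=
  ⟨fun ⟨C⟩ => ⟨C.congr h_deg h_aug⟩,
    fun ⟨C⟩ => ⟨C.congr (fun n => (h_deg n).symm) h_aug.symm⟩⟩

variable {GA : GRing R A} {GB : GRing S B}

attribute [local instance] prodModule in
def KResolution.prod (CA : KResolution GA) (CB : KResolution GB) :
    KResolution (GA.prod GB) where
  P n := CA.P n × CB.P n
  mod _ := prodModule
  proj n := haveI := CA.proj n; haveI := CB.proj n; projective_prodModule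
  g n d := (CA.g n d).prod (CB.g n d)
  internal n := (CA.internal n).prod (CB.internal n)
  smul_mem n _ _ _ _ hc hx := ⟨CA.smul_mem n hc.1 hx.1, CB.smul_mem n hc.2 hx.2⟩
  f n := (CA.f n).prodMap (CB.f n)
  f_linear n c x := Prod.ext (CA.f_linear n c.1 x.1) (CB.f_linear n c.2 x.2)
  f_graded n d x hx := ⟨CA.f_graded n d x.1 hx.1, CB.f_graded n d x.2 hx.2⟩
  eps := CA.eps.prodMap CB.eps
  eps_linear c x := Prod.ext (CA.eps_linear c.1 x.1) (CB.eps_linear c.2 x.2)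
  eps_surj r := by
    obtain ⟨u, hu⟩ := CA.eps_surj r.1
    obtain ⟨v, hv⟩ := CB.eps_surj r.2
    exact ⟨(u, v), Prod.ext hu hv⟩
  eps_graded d x hx := Prod.ext (CA.eps_graded d x.1 hx.1) (CB.eps_graded d x.2 hx.2)
  comp0 x := Prod.ext (CA.comp0 x.1) (CB.comp0 x.2)
  exact0 x hx := by
    obtain ⟨u, hu⟩ := CA.exact0 x.1 congr(($hx).1)
    obtain ⟨v, hv⟩ := CB.exact0 x.2 congr(($hx).2)
    exact ⟨(u, v), Prod.ext hu hv⟩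
  comp n x := Prod.ext (CA.comp n x.1) (CB.comp n x.2)
  exact n x hx := by
    obtain ⟨u, hu⟩ := CA.exact n x.1 congr(($hx).1)
    obtain ⟨v, hv⟩ := CB.exact n x.2 congr(($hx).2)
    exact ⟨(u, v), Prod.ext hu hv⟩
  gen n x := by
    rw [show x = (x.1, 0) + (0, x.2) by simp]
    refine add_mem ((AddMonoidHom.inl (CA.P n) (CB.P n)).apply_mem_closure ?_ (CA.gen n x.1))
      ((AddMonoidHom.inr (CA.P n) (CB.P n)).apply_mem_closure ?_ (CB.gen n x.2))
    · rintro _ ⟨a, y, hy, rfl⟩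
      exact ⟨(a, 0), (y, 0), ⟨hy, zero_mem _⟩, by rw [prod_smul_prod, smul_zero]; rfl⟩
    · rintro _ ⟨b, y, hy, rfl⟩
      exact ⟨(0, b), (0, y), ⟨zero_mem _, hy⟩, by rw [prod_smul_prod, smul_zero]; rfl⟩

end Product

section Factors

variable {R S A B : Type} [Ring R] [Ring S] [Ring A] [Ring B] {GA : GRing R A} {GB : GRing S B}
  (C : KResolution (GA.prod GB))

lemma KResolution.fstProj_mem {n d : ℕ} {x : C.P n} (hx : x ∈ C.g n d) :
    (fstProj A B x : C.P n) ∈ C.g n d := by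
  simpa [coe_fstProj] using
    C.smul_mem n (a := (1, 0)) ⟨GA.one_mem_deg_zero, (GB.deg 0).zero_mem⟩ hx

lemma KResolution.eps_eq_zero_of_mem_fstPart {x : C.P 0} (hx : x ∈ fstPart A B (C.P 0))
    (h : (C.eps x).1 = 0) : C.eps x = 0 := by
  rw [← mem_fstPart.1 hx, C.eps_linear]
  ext
  · simpa [GRing.prod] using h
  · simp [GRing.prod]

def KResolution.fst : KResolution GA where
  P n := fstPart A B (C.P n)
  proj n := haveI := C.proj n; projective_fstPart
  g n d := (C.g n d).comap (fstPart A B (C.P n)).subtype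
  internal n := (C.internal n).of_retract _ (fstProj A B) (fun _ _ h => h)
    (fun _ _ => C.fstProj_mem) fstProj_of_mem
  smul_mem n _ _ _ _ ha hx := C.smul_mem n (a := (_, 0)) ⟨ha, (GB.deg _).zero_mem⟩ hx
  f n := fstPartMap (C.f n)
  f_linear n a x := by
    ext
    rw [coe_fstPartMap (C.f_linear n), coe_fstPart_smul, coe_fstPart_smul,
      coe_fstPartMap (C.f_linear n)]
    exact C.f_linear n (a, 0) x
  f_graded n d x hx := by
    rw [AddSubgroup.mem_comap, AddSubgroup.coe_subtype, coe_fstPartMap (C.f_linear n)]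
    exact C.f_graded n d x hx
  eps := (AddMonoidHom.fst R S).comp (C.eps.comp (fstPart A B (C.P 0)).subtype)
  eps_linear a x := congrArg Prod.fst (C.eps_linear (a, 0) x)
  eps_surj r := by
    obtain ⟨x, hx⟩ := C.eps_surj (r, 0)
    exact ⟨fstProj A B x, by simp [coe_fstProj, C.eps_linear, hx, GRing.prod]⟩
  eps_graded d x hx := congrArg Prod.fst (C.eps_graded d x hx)
  comp0 x := by
    change (C.eps (fstPartMap (C.f 0) x : C.P 0)).1 = 0
    rw [coe_fstPartMap (C.f_linear 0), C.comp0]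
    rfl
  exact0 x hx := mem_range_fstPartMap (C.f_linear 0)
    (C.exact0 x (C.eps_eq_zero_of_mem_fstPart x.2 hx))
  comp n x := by
    ext
    rw [coe_fstPartMap (C.f_linear n), coe_fstPartMap (C.f_linear (n + 1))]
    exact C.comp n x
  exact n x hx := by
    refine mem_range_fstPartMap (C.f_linear (n + 1)) (C.exact n x ?_)
    rw [← coe_fstPartMap (C.f_linear n), hx]
    rfl
  gen n x := by
    rw [← fstProj_of_mem x]
    refine (fstProj A B).apply_mem_closure ?_ (C.gen n x)
    rintro _ ⟨c, y, hy, rfl⟩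
    exact ⟨c.1, fstProj A B y, C.fstProj_mem hy, fstProj_smul c y⟩

def KResolution.swap : KResolution (GB.prod GA) :=
  letI (n : ℕ) : Module (B × A) (C.P n) :=
    Module.compHom (C.P n) (RingEquiv.prodComm : B × A ≃+* A × B).toRingHom
  { P := C.P
    proj := fun n => haveI := C.proj n
      .of_semilinearRetract (AddEquiv.prodComm : A × B ≃+ B × A).toAddMonoidHom Prod.swap
        (fun _ _ => rfl) (.id _) (.id _) (fun _ _ => rfl) (fun _ _ => rfl) (fun _ => rfl)
    g := C.g
    internal := C.internal
    smul_mem := fun n _ _ _ _ hc hx => C.smul_mem n ⟨hc.2, hc.1⟩ hx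
    f := C.f
    f_linear := fun n c x => C.f_linear n c.swap x
    f_graded := C.f_graded
    eps := (AddEquiv.prodComm : R × S ≃+ S × R).toAddMonoidHom.comp C.eps
    eps_linear := fun c x => congrArg Prod.swap (C.eps_linear c.swap x)
    eps_surj := fun r => by
      obtain ⟨x, hx⟩ := C.eps_surj r.swap
      exact ⟨x, congrArg Prod.swap hx⟩
    eps_graded := fun d x hx => congrArg Prod.swap (C.eps_graded d x hx)
    comp0 := fun x => congrArg Prod.swap (C.comp0 x)
    exact0 := fun x hx => C.exact0 x (Prod.swap_injective hx)
    comp := C.comp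
    exact := C.exact
    gen := fun n x => by
      refine AddSubgroup.closure_mono ?_ (C.gen n x)
      rintro _ ⟨c, y, hy, rfl⟩
      exact ⟨c.swap, y, hy, rfl⟩ }

end Factors

theorem product_koszul_iff_general
    (R S : Type) [Ring R] [Ring S]
    (A B : Type) [Ring A] [Ring B]
    (GA : GRing R A) (GB : GRing S B) (GAB : GRing (R × S) (A × B))
    (h_aug : GAB.aug = RingHom.prodMap GA.aug GB.aug)
    (h_deg : ∀ n, GAB.deg n = (GA.deg n).prod (GB.deg n)) :
    GAB.IsKoszul ↔ GA.IsKoszul ∧ GB.IsKoszul := by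
  rw [GRing.isKoszul_congr (G' := GA.prod GB) h_deg h_aug]
  exact ⟨fun ⟨C⟩ => ⟨⟨C.fst⟩, ⟨C.swap.fst⟩⟩, fun ⟨⟨CA⟩, ⟨CB⟩⟩ => ⟨CA.prod CB⟩⟩

/-- Let `R` and `S` be semisimple rings, `A` a connected graded
`R`-ring and `B` a connected graded `S`-ring.  Then the connected graded
`R × S`-ring `A × B` (with components `(A × B)_n = A_n × B_n`) is Koszul if and
only if both `A` and `B` are Koszul. -/
theorem product_koszul_iff
    (R S : Type) [Ring R] [Ring S]
    (hR : IsSemisimpleRing R) (hS : IsSemisimpleRing S)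
    (A B : Type) [Ring A] [Ring B]
    (GA : GRing R A) (GB : GRing S B) (GAB : GRing (R × S) (A × B))
    (h_emb : GAB.emb = RingHom.prodMap GA.emb GB.emb)
    (h_aug : GAB.aug = RingHom.prodMap GA.aug GB.aug)
    (h_deg : ∀ n, GAB.deg n = (GA.deg n).prod (GB.deg n)) :
    GAB.IsKoszul ↔ GA.IsKoszul ∧ GB.IsKoszul :=
  product_koszul_iff_general R S A B GA GB GAB h_aug h_deg
end P1605
end
end

section
/- Let k be a field, P a finite graded poset, t ∈ P a maximal element, Q = P \ {t} and B = k^a[Q]. Let u, v be two distinct predecessors of t and s a common predecessor of u and v. Then s = inf{u,v} in Q if and only if Be_{u,t} ∩ Be_{v,t} = Be_{s,t} as subspaces of the incidence algebra of P. -/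
/-!
The elements `e x t` with `x ≤ t` are linearly independent, so `S ↦ span {e x t : x ∈ S}` is
injective on sets and turns intersections into intersections. Hence
`B·e_{u,t} ∩ B·e_{v,t} = B·e_{s,t}` amounts to `Iic u ∩ Iic v = Iic s` below `t`, which is
exactly the statement that `s` is the infimum of `u` and `v`.
-/

noncomputable section
open MulOpposite
open scoped DirectSum

namespace P1605

--CHUNK_G_END

--CHUNK_P_BEGIN
section Posets

variable (k : Type) [Field k] (P : Type) [PartialOrder P]

/-- `ρ` is a length function for the graded poset `P`: every interval `[x, y]`
contains a maximal chain (a saturated chain for the covering relation `⋖`), and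
every maximal chain from `x` to `y` has the same length `ρ x y`. -/
structure LengthFn {P : Type} [PartialOrder P] (ρ : P → P → ℕ) : Prop where
  exists_chain : ∀ x y : P, x ≤ y → ∃ c : List P,
    c.Chain' (· ⋖ ·) ∧ c.head? = some x ∧ c.getLast? = some y
  chain_length : ∀ (x y : P) (c : List P),
    c.Chain' (· ⋖ ·) → c.head? = some x → c.getLast? = some y →
    c.length = ρ x y + 1

/-- `A`, together with the family `e`, is (a copy of) the incidence algebra of the
finite poset `P` over the field `k`: the elements `e x y`, for `x ≤ y`, form a
`k`-basis of `A` and multiply by `e x y * e z w = δ_{y z} · e x w`; the identity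
is `∑ₓ e x x`. -/
structure IncAlg [Fintype P] [DecidableEq P] (A : Type) [Ring A] [Algebra k A] where
  e : P → P → A
  e_not_le : ∀ x y : P, ¬ x ≤ y → e x y = 0
  e_mul : ∀ x y z w : P, x ≤ y → z ≤ w →
    e x y * e z w = if y = z then e x w else 0
  indep : LinearIndependent k (fun p : {p : P × P // p.1 ≤ p.2} => e p.1.1 p.1.2)
  span_top : Submodule.span k
    (Set.range (fun p : {p : P × P // p.1 ≤ p.2} => e p.1.1 p.1.2)) = ⊤
  one_def : (1 : A) = ∑ x : P, e x x

variable {k P}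

/-- The canonical structure of connected graded `R`-ring (`R = k^P`) on the
incidence algebra of a finite graded poset: `e x y` is homogeneous of degree
`l([x,y]) = ρ x y`, the degree-zero part is `R` embedded diagonally, and the
augmentation kills all `e x y` with `x ≠ y`. -/
structure IncGrading [Fintype P] [DecidableEq P] {A : Type} [Ring A] [Algebra k A]
    (inc : IncAlg k P A) (ρ : P → P → ℕ) (G : GRing (P → k) A) : Prop where
  emb_eq : ∀ f : P → k, G.emb f = ∑ x : P, f x • inc.e x x
  deg_eq : ∀ d : ℕ, (G.deg d : Set A) =
    ↑(Submodule.span k {a : A | ∃ x y : P, x ≤ y ∧ ρ x y = d ∧ a = inc.e x y})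
  aug_eq : ∀ x y : P, x ≤ y →
    G.aug (inc.e x y) = if x = y then Pi.single x (1 : k) else 0

end Posets
--CHUNK_P_END


open Submodule

section SpanImage

variable {R M ι : Type*} [Semiring R] [AddCommMonoid M] [Module R M] {v : ι → M}

theorem _root_.LinearIndependent.span_image_inter (hv : LinearIndependent R v) (s t : Set ι) :
    span R (v '' (s ∩ t)) = span R (v '' s) ⊓ span R (v '' t) := by
  simp only [Finsupp.span_image_eq_map_linearCombination, Finsupp.supported_inter]
  exact map_inf _ hv.finsuppLinearCombination_injective

theorem _root_.LinearIndependent.apply_mem_span_image_iff [Nontrivial R]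
    (hv : LinearIndependent R v) {s : Set ι} {i : ι} :
    v i ∈ span R (v '' s) ↔ i ∈ s :=
  ⟨fun h => by_contra fun hi => hv.notMem_span_image hi h,
    fun hi => subset_span (Set.mem_image_of_mem v hi)⟩

theorem _root_.LinearIndependent.span_image_injective [Nontrivial R]
    (hv : LinearIndependent R v) : Function.Injective fun s : Set ι => span R (v '' s) := by
  intro s t h
  ext i
  rw [← hv.apply_mem_span_image_iff, ← hv.apply_mem_span_image_iff (s := t)]
  simp only at h
  rw [h]

end SpanImage

namespace IncAlg

variable {k P A : Type} [Field k] [PartialOrder P] [Fintype P] [DecidableEq P] [Ring A]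
  [Algebra k A]

theorem linearIndependent_e_left (inc : IncAlg k P A) (t : P) :
    LinearIndependent k fun x : Set.Iic t => inc.e x t :=
  inc.indep.comp (fun x => ⟨(x.1, t), x.2⟩) fun _ _ h => Subtype.ext (congrArg (·.1.1) h)

theorem span_e_left_eq_span_image (inc : IncAlg k P A) {t w : P} (hw : w ≤ t) :
    span k {a : A | ∃ x : P, x ≤ w ∧ a = inc.e x t} =
      span k ((fun x : Set.Iic t => inc.e x t) '' {x | x.1 ≤ w}) := by
  congr 1
  ext a
  constructor
  · rintro ⟨x, hx, rfl⟩
    exact ⟨⟨x, hx.trans hw⟩, hx, rfl⟩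
  · rintro ⟨x, hx, rfl⟩
    exact ⟨x, hx, rfl⟩

end IncAlg

theorem inf_iff_intersection_general
    (k : Type) [Field k] (P : Type) [PartialOrder P] [Fintype P] [DecidableEq P]
    (A : Type) [Ring A] [Algebra k A] (inc : IncAlg k P A)
    (t : P)
    (u v : P) (hu : u ⋖ t) (hv : v ⋖ t)
    (s : P) (hsu : s ⋖ u) (hsv : s ⋖ v) :
    (∀ x : P, x ≤ u → x ≤ v → x ≤ s) ↔
      Submodule.span k {a : A | ∃ x : P, x ≤ u ∧ a = inc.e x t} ⊓
        Submodule.span k {a : A | ∃ x : P, x ≤ v ∧ a = inc.e x t}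
      = Submodule.span k {a : A | ∃ x : P, x ≤ s ∧ a = inc.e x t} := by
  have hind := inc.linearIndependent_e_left t
  rw [inc.span_e_left_eq_span_image hu.le, inc.span_e_left_eq_span_image hv.le,
    inc.span_e_left_eq_span_image (hsu.le.trans hu.le), ← hind.span_image_inter,
    hind.span_image_injective.eq_iff]
  constructor
  · intro hinf
    ext x
    exact ⟨fun ⟨hxu, hxv⟩ => hinf x hxu hxv, fun hxs => ⟨hxs.trans hsu.le, hxs.trans hsv.le⟩⟩
  · intro hinter x hxu hxv
    have hx : (⟨x, hxu.trans hu.le⟩ : Set.Iic t) ∈ {x | x.1 ≤ u} ∩ {x | x.1 ≤ v} := ⟨hxu, hxv⟩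
    rw [hinter] at hx
    exact hx

/-- Let `P` be a finite graded poset, `t` a maximal element,
`u ≠ v` two predecessors of `t` and `s` a common predecessor of `u` and `v`.
Then `s = inf {u, v}` in `Q = P \ {t}` if and only if
`B·e_{u,t} ∩ B·e_{v,t} = B·e_{s,t}` inside the incidence algebra of `P`. -/
theorem inf_iff_intersection
    (k : Type) [Field k] (P : Type) [PartialOrder P] [Fintype P] [DecidableEq P]
    (ρ : P → P → ℕ) (hρ : LengthFn ρ)
    (A : Type) [Ring A] [Algebra k A] (inc : IncAlg k P A)
    (t : P) (ht : ∀ x : P, t ≤ x → x = t)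
    (u v : P) (hu : u ⋖ t) (hv : v ⋖ t) (huv : u ≠ v)
    (s : P) (hsu : s ⋖ u) (hsv : s ⋖ v) :
    (∀ x : P, x ≤ u → x ≤ v → x ≤ s) ↔
      Submodule.span k {a : A | ∃ x : P, x ≤ u ∧ a = inc.e x t} ⊓
        Submodule.span k {a : A | ∃ x : P, x ≤ v ∧ a = inc.e x t}
      = Submodule.span k {a : A | ∃ x : P, x ≤ s ∧ a = inc.e x t} :=
  inf_iff_intersection_general k P A inc t u v hu hv s hsu hsv

end P1605
end
end

section
/- Let k be a field, P a finite graded poset, t ∈ P a maximal element, Q = P \ {t}, B = k^a[Q], and F the set of predecessors of t. Assume |F| ≥ 2 and that there exists a common predecessor s of all elements of F such that s = inf{u,v} for every pair of distinct elements u, v ∈ F. Then for every u ∈ F and with F' = F \ {u}, one has Be_{u,t} ∩ (Σ_{x∈F'} Be_{x,t}) = Be_{s,t}. -/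
noncomputable section
open MulOpposite
open scoped DirectSum

namespace P1605

--CHUNK_P_END

/-! The elements `e x t` with `x ≤ t` are linearly independent, so spans of subfamilies of them
intersect as their index sets do. Here the index sets are the down-set of `u` and the union of
the down-sets of the other predecessors of `t`, and since `s` is the meet of `u` with each of
them, that intersection is the down-set of `s`. -/

theorem _root_.LinearIndependent.span_image_inter_s11 {R M ι : Type*} [Semiring R] [AddCommMonoid M]
    [Module R M] {v : ι → M} (hv : LinearIndependent R v) (S T : Set ι) :
    Submodule.span R (v '' (S ∩ T)) = Submodule.span R (v '' S) ⊓ Submodule.span R (v '' T) := by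
  simp only [Finsupp.span_image_eq_map_linearCombination, Finsupp.supported_inter]
  exact Submodule.map_inf _ hv

namespace IncAlg

variable {k P A : Type} [Field k] [PartialOrder P] [Fintype P] [DecidableEq P] [Ring A]
  [Algebra k A] (inc : IncAlg k P A)

def col (t : P) (x : Set.Iic t) : A := inc.e x t

theorem linearIndependent_col (t : P) : LinearIndependent k (inc.col t) :=
  inc.indep.comp (fun x : Set.Iic t => ⟨(x.1, t), x.2⟩) fun _ _ h =>
    Subtype.ext (congrArg (·.1.1) h)

theorem setOf_e_eq_image_col {t : P} {p : P → Prop} (hp : ∀ x, p x → x ≤ t) :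
    {a : A | ∃ x, p x ∧ a = inc.e x t} = inc.col t '' {x | p x} := by
  ext a
  constructor
  · rintro ⟨x, hx, rfl⟩
    exact ⟨⟨x, hp x hx⟩, hx, rfl⟩
  · rintro ⟨x, hx, rfl⟩
    exact ⟨x, hx, rfl⟩

theorem span_e_inf_span_e {t : P} {p q : P → Prop} (hp : ∀ x, p x → x ≤ t)
    (hq : ∀ x, q x → x ≤ t) :
    Submodule.span k {a : A | ∃ x, p x ∧ a = inc.e x t} ⊓
      Submodule.span k {a : A | ∃ x, q x ∧ a = inc.e x t}
    = Submodule.span k {a : A | ∃ x, (p x ∧ q x) ∧ a = inc.e x t} := by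
  rw [inc.setOf_e_eq_image_col hp, inc.setOf_e_eq_image_col hq,
    inc.setOf_e_eq_image_col fun x h => hp x h.1, Set.ofPred_and,
    ← (inc.linearIndependent_col t).span_image_inter_s11]

end IncAlg

theorem le_and_exists_covBy_ne_le_iff {P : Type*} [PartialOrder P] {t s u x : P}
    (hu : u ⋖ t) (hF : {w | w ⋖ t}.Nontrivial) (hs : ∀ w, w ⋖ t → s ≤ w)
    (hinf : ∀ w w' : P, w ⋖ t → w' ⋖ t → w ≠ w' → ∀ x : P, x ≤ w → x ≤ w' → x ≤ s) :
    (x ≤ u ∧ ∃ w, w ⋖ t ∧ w ≠ u ∧ x ≤ w) ↔ x ≤ s := by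
  constructor
  · rintro ⟨hxu, w, hw, hwu, hxw⟩
    exact hinf u w hu hw hwu.symm x hxu hxw
  · intro hxs
    obtain ⟨w, hw, hwu⟩ := hF.exists_ne u
    exact ⟨hxs.trans (hs u hu), w, hw, hwu, hxs.trans (hs w hw)⟩

theorem intersection_with_sum_general
    (k : Type) [Field k] (P : Type) [PartialOrder P] [Fintype P] [DecidableEq P]
    (A : Type) [Ring A] [Algebra k A] (inc : IncAlg k P A)
    (t : P)
    (hcard : ∃ u v : P, u ⋖ t ∧ v ⋖ t ∧ u ≠ v)
    (s : P) (hs : ∀ w : P, w ⋖ t → s ⋖ w)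
    (hinf : ∀ w w' : P, w ⋖ t → w' ⋖ t → w ≠ w' → ∀ x : P, x ≤ w → x ≤ w' → x ≤ s)
    (u : P) (hu : u ⋖ t) :
    Submodule.span k {a : A | ∃ x : P, x ≤ u ∧ a = inc.e x t} ⊓
      Submodule.span k {a : A | ∃ w : P, w ⋖ t ∧ w ≠ u ∧ ∃ x : P, x ≤ w ∧ a = inc.e x t}
    = Submodule.span k {a : A | ∃ x : P, x ≤ s ∧ a = inc.e x t} := by
  have hF : {w | w ⋖ t}.Nontrivial := by
    obtain ⟨v, w, hv, hw, hvw⟩ := hcard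
    exact ⟨v, hv, w, hw, hvw⟩
  have hsum : {a : A | ∃ w, w ⋖ t ∧ w ≠ u ∧ ∃ x, x ≤ w ∧ a = inc.e x t}
      = {a | ∃ x, (∃ w, w ⋖ t ∧ w ≠ u ∧ x ≤ w) ∧ a = inc.e x t} := by
    ext a
    constructor
    · rintro ⟨w, hw, hwu, x, hxw, rfl⟩
      exact ⟨x, ⟨w, hw, hwu, hxw⟩, rfl⟩
    · rintro ⟨x, ⟨w, hw, hwu, hxw⟩, rfl⟩
      exact ⟨w, hw, hwu, x, hxw, rfl⟩
  rw [hsum, inc.span_e_inf_span_e (fun x hx => hx.trans hu.le)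
    (fun x ⟨w, hw, _, hxw⟩ => hxw.trans hw.le)]
  simp only [le_and_exists_covBy_ne_le_iff hu hF (fun w hw => (hs w hw).le) hinf]

/-- Let `P` be a finite graded poset, `t` a maximal element and
`F` the set of predecessors of `t`, with `|F| ≥ 2`.  Assume there is a common
predecessor `s` of all elements of `F` which is the infimum of every pair of
distinct elements of `F`.  Then for every `u ∈ F`, with `F' = F \ {u}`, one has
`B·e_{u,t} ∩ (∑_{x ∈ F'} B·e_{x,t}) = B·e_{s,t}`. -/
theorem intersection_with_sum
    (k : Type) [Field k] (P : Type) [PartialOrder P] [Fintype P] [DecidableEq P]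
    (ρ : P → P → ℕ) (hρ : LengthFn ρ)
    (A : Type) [Ring A] [Algebra k A] (inc : IncAlg k P A)
    (t : P) (ht : ∀ x : P, t ≤ x → x = t)
    (hcard : ∃ u v : P, u ⋖ t ∧ v ⋖ t ∧ u ≠ v)
    (s : P) (hs : ∀ w : P, w ⋖ t → s ⋖ w)
    (hinf : ∀ w w' : P, w ⋖ t → w' ⋖ t → w ≠ w' → ∀ x : P, x ≤ w → x ≤ w' → x ≤ s)
    (u : P) (hu : u ⋖ t) :
    Submodule.span k {a : A | ∃ x : P, x ≤ u ∧ a = inc.e x t} ⊓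
      Submodule.span k {a : A | ∃ w : P, w ⋖ t ∧ w ≠ u ∧ ∃ x : P, x ≤ w ∧ a = inc.e x t}
    = Submodule.span k {a : A | ∃ x : P, x ≤ s ∧ a = inc.e x t} :=
  intersection_with_sum_general k P A inc t hcard s hs hinf u hu

end P1605
end
end
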